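/- In the well-pointed endofunctor setting below, for every object X of C both of the morphisms ι.app (T X) : T X ⟶ T (T X) and T.map (ι.app X) : T X ⟶ T (T X) are isomorphisms. (This is the main conclusion of the paper's localization lemma: by Lurie's criterion, the pair (T, ι) therefore exhibits a reflective localization of C.) -/

import Mathlib

/-
Write `ιₙ : Uⁿ A ⟶ T A` for the colimit legs. Naturality of `α` together with well-pointedness
gives `ιₙ₊₁ ≫ α (T A) = U (ιₙ)`. As `U` preserves the colimit, the legs `ιₙ₊₁` therefore assemble
into an inverse of `α (T A)`, and well-pointedness propagates invertibility of `α` to every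
`Uⁿ (T A)`. So the chain of `T A` consists of isomorphisms and its leg at `0`, namely `ι (T A)`,
is an isomorphism. The same identity shows that a map out of `T A` into an object at which `α`
is mono is determined by its restriction along `ι₀`; since `T (ι X)` and `ι (T X)` restrict to
the same map, they are equal.
-/

open CategoryTheory CategoryTheory.Limits

universe v u

variable {C : Type u} [Category.{v} C]

def funIter (U : C ⥤ C) : ℕ → C ⥤ C
  | 0 => 𝟭 C
  | n + 1 => funIter U n ⋙ U

lemma funIter_obj_comm (U : C ⥤ C) (n : ℕ) (X : C) :
    (funIter U n).obj (U.obj X) = U.obj ((funIter U n).obj X) := by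
  induction n with
  | zero => rfl
  | succ n ih =>
      show U.obj ((funIter U n).obj (U.obj X)) = U.obj (U.obj ((funIter U n).obj X))
      rw [ih]

/-- The chain `X ⟶ U X ⟶ U² X ⟶ ⋯` with transition maps `α.app (Uⁿ X)`. -/
def chain (U : C ⥤ C) (α : 𝟭 C ⟶ U) (A : C) : ℕ ⥤ C :=
  Functor.ofSequence (X := fun n => (funIter U n).obj A)
    (fun n => α.app ((funIter U n).obj A))

/-- The functorial action of the chain construction. -/
def chainMap (U : C ⥤ C) (α : 𝟭 C ⟶ U) {A B : C} (f : A ⟶ B) :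
    chain U α A ⟶ chain U α B :=
  NatTrans.ofSequence (F := chain U α A) (G := chain U α B)
    (fun n => (funIter U n).map f)
    (fun n => by
      simp only [chain]
      first
        | (erw [Functor.ofSequence_map_homOfLE_succ, Functor.ofSequence_map_homOfLE_succ]
           exact (α.naturality ((funIter U n).map f)).symm)
        | exact (α.naturality ((funIter U n).map f)).symm)

variable [HasColimitsOfShape ℕ C]

/-- `T X`, the colimit of the chain `X ⟶ U X ⟶ U² X ⟶ ⋯`. -/
noncomputable def Tobj (U : C ⥤ C) (α : 𝟭 C ⟶ U) (A : C) : C :=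
  colimit (chain U α A)

/-- The action of `T` on morphisms. -/
noncomputable def Tmap (U : C ⥤ C) (α : 𝟭 C ⟶ U) {A B : C} (f : A ⟶ B) :
    Tobj U α A ⟶ Tobj U α B :=
  colimMap (chainMap U α f)

/-- The component `ι.app A : A ⟶ T A`, the colimit cocone leg at stage `0`. -/
noncomputable def tUnit (U : C ⥤ C) (α : 𝟭 C ⟶ U) (A : C) : A ⟶ Tobj U α A :=
  colimit.ι (chain U α A) 0

lemma CategoryTheory.Functor.isEventuallyConstantFrom_zero_of_isIso_map_succ
    {D : Type*} [Category D] (F : ℕ ⥤ D)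
    (h : ∀ n : ℕ, IsIso (F.map (homOfLE (n.le_add_right 1)))) :
    F.IsEventuallyConstantFrom 0 := by
  intro j f
  obtain rfl : f = homOfLE j.zero_le := rfl
  induction j with
  | zero => exact (Functor.map_id F 0).symm ▸ inferInstance
  | succ n ih =>
    rw [show homOfLE (n + 1).zero_le = homOfLE n.zero_le ≫ homOfLE (n.le_add_right 1) from rfl,
      F.map_comp]
    infer_instance

section

variable {D : Type*} [Category D] (U : D ⥤ D) (α : 𝟭 D ⟶ U)

lemma chain_map_succ (A : D) (n : ℕ) :
    (chain U α A).map (homOfLE (n.le_add_right 1)) = α.app ((funIter U n).obj A) :=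
  Functor.ofSequence_map_homOfLE_succ _ n

lemma isIso_app_funIter_obj (hwp : ∀ X : D, U.map (α.app X) = α.app (U.obj X))
    (Z : D) [IsIso (α.app Z)] (n : ℕ) : IsIso (α.app ((funIter U n).obj Z)) := by
  induction n with
  | zero => assumption
  | succ n ih =>
    change IsIso (α.app (U.obj ((funIter U n).obj Z)))
    rw [← hwp]
    infer_instance

lemma map_chain_map_succ (hwp : ∀ X : D, U.map (α.app X) = α.app (U.obj X)) (A : D) (n : ℕ) :
    U.map ((chain U α A).map (homOfLE (n.le_add_right 1))) =
      (chain U α A).map (homOfLE ((n + 1).le_add_right 1)) := by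
  rw [chain_map_succ, chain_map_succ]
  exact hwp _

end

section

variable (U : C ⥤ C) (α : 𝟭 C ⟶ U)

lemma ι_succ_comp_app (hwp : ∀ X : C, U.map (α.app X) = α.app (U.obj X)) (A : C) (n : ℕ) :
    colimit.ι (chain U α A) (n + 1) ≫ α.app (colimit (chain U α A)) =
      U.map (colimit.ι (chain U α A) n) := by
  rw [← colimit.w (chain U α A) (homOfLE (n.le_add_right 1)), U.map_comp, chain_map_succ]
  refine (α.naturality (colimit.ι (chain U α A) (n + 1))).trans ?_
  exact congrArg (· ≫ _) (hwp _).symm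

noncomputable def shiftedCocone (hwp : ∀ X : C, U.map (α.app X) = α.app (U.obj X)) (A : C) :
    Cocone (chain U α A ⋙ U) where
  pt := Tobj U α A
  ι := NatTrans.ofSequence (fun n => colimit.ι (chain U α A) (n + 1)) fun n => by
    refine (congrArg (· ≫ colimit.ι (chain U α A) (n + 2))
      (map_chain_map_succ U α hwp A n)).trans ?_
    exact (colimit.w _ _).trans (Category.comp_id _).symm

lemma isIso_app_Tobj [PreservesColimitsOfShape ℕ U]
    (hwp : ∀ X : C, U.map (α.app X) = α.app (U.obj X)) (A : C) : IsIso (α.app (Tobj U α A)) := by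
  have hc : IsColimit (U.mapCocone (colimit.cocone (chain U α A))) :=
    isColimitOfPreserves U (colimit.isColimit _)
  obtain ⟨β, hβ⟩ : ∃ β : U.obj (colimit (chain U α A)) ⟶ colimit (chain U α A),
      ∀ n, U.map (colimit.ι (chain U α A) n) ≫ β = colimit.ι (chain U α A) (n + 1) :=
    ⟨hc.desc (shiftedCocone U α hwp A), hc.fac _⟩
  change IsIso (α.app (colimit (chain U α A)))
  refine ⟨β, colimit.hom_ext fun n => ?_, hc.hom_ext fun n => ?_⟩
  · have hnat := α.naturality (colimit.ι (chain U α A) n)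
    dsimp only [Functor.id_map, Functor.id_obj] at hnat ⊢
    rw [reassoc_of% hnat, hβ, Category.comp_id]
    exact (congrArg (· ≫ _) (chain_map_succ U α A n).symm).trans (colimit.w _ _)
  · change U.map (colimit.ι _ n) ≫ β ≫ α.app _ = U.map (colimit.ι _ n) ≫ 𝟙 _
    rw [reassoc_of% hβ n, Category.comp_id]
    exact ι_succ_comp_app U α hwp A n

lemma ι_succ_comp_comp_app (hwp : ∀ X : C, U.map (α.app X) = α.app (U.obj X)) {A Y : C}
    (f : colimit (chain U α A) ⟶ Y) (n : ℕ) :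
    colimit.ι (chain U α A) (n + 1) ≫ f ≫ α.app Y = U.map (colimit.ι (chain U α A) n ≫ f) :=
  (congrArg (colimit.ι (chain U α A) (n + 1) ≫ ·) (α.naturality f)).trans <|
    (Category.assoc _ _ _).symm.trans <|
      (congrArg (· ≫ U.map f) (ι_succ_comp_app U α hwp A n)).trans (U.map_comp _ _).symm

lemma Tobj_hom_ext (hwp : ∀ X : C, U.map (α.app X) = α.app (U.obj X)) {A Y : C}
    [Mono (α.app Y)] {f g : Tobj U α A ⟶ Y} (h : tUnit U α A ≫ f = tUnit U α A ≫ g) :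
    f = g := by
  refine colimit.hom_ext fun n => ?_
  induction n with
  | zero => exact h
  | succ n ih =>
    refine (cancel_mono (α.app Y)).1 <| ((Category.assoc _ _ _).trans
      (ι_succ_comp_comp_app U α hwp f n)).trans ?_
    rw [ih]
    exact ((Category.assoc _ _ _).trans (ι_succ_comp_comp_app U α hwp g n)).symm

lemma isIso_tUnit_Tobj [PreservesColimitsOfShape ℕ U]
    (hwp : ∀ X : C, U.map (α.app X) = α.app (U.obj X)) (X : C) :
    IsIso (tUnit U α (Tobj U α X)) := by
  have := isIso_app_Tobj U α hwp X
  refine (Functor.isEventuallyConstantFrom_zero_of_isIso_map_succ _ fun n => ?_)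
    |>.isIso_ι_of_isColimit (colimit.isColimit _)
  rw [chain_map_succ]
  exact isIso_app_funIter_obj U α hwp _ n

lemma Tmap_tUnit [PreservesColimitsOfShape ℕ U]
    (hwp : ∀ X : C, U.map (α.app X) = α.app (U.obj X)) (X : C) :
    Tmap U α (tUnit U α X) = tUnit U α (Tobj U α X) := by
  have := isIso_app_Tobj U α hwp (Tobj U α X)
  exact Tobj_hom_ext U α hwp (ι_colimMap (chainMap U α (tUnit U α X)) 0)

end

/-- For a well-pointed endofunctor `U` with unit `α` and localization `(T, ι)` given by
the colimit of the chain of iterates, both `ι.app (T X) : T X ⟶ T (T X)` and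
`T.map (ι.app X) : T X ⟶ T (T X)` are isomorphisms. -/
theorem stmt4 (U : C ⥤ C) (α : 𝟭 C ⟶ U)
    [PreservesColimitsOfShape ℕ U]
    (hwp : ∀ X : C, U.map (α.app X) = α.app (U.obj X)) (X : C) :
    IsIso (tUnit U α (Tobj U α X)) ∧ IsIso (Tmap U α (tUnit U α X)) :=
  ⟨isIso_tUnit_Tobj U α hwp X, Tmap_tUnit U α hwp X ▸ isIso_tUnit_Tobj U α hwp X⟩
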